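/- Let T be an expandable tree (γ_T > 1) and let 𝒯 ⊆ {0,1}^T be a tree-shift. Then h(𝒯) > 0 if and only if 𝒯 has the boundary independence property. -/
import Mathlib


open Filter

/-- A (rooted, locally finite) tree realized as a set of finite words over the
`d` generators: it contains the root (the empty word) and is closed under prefixes. -/
def IsTree {d : ℕ} (T : Set (List (Fin d))) : Prop :=
  ([] : List (Fin d)) ∈ T ∧ ∀ w ∈ T, ∀ u : List (Fin d), u <+: w → u ∈ T

/-- `T_n`: the set of vertices of `T` at distance `n` from the root. -/
def level {d : ℕ} (T : Set (List (Fin d))) (n : ℕ) : Set (List (Fin d)) :=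
  {w ∈ T | w.length = n}

/-- `Δ_n = ∪_{i=0}^n T_i`: the set of vertices of `T` at distance at most `n`. -/
def ball {d : ℕ} (T : Set (List (Fin d))) (n : ℕ) : Set (List (Fin d)) :=
  {w ∈ T | w.length ≤ n}

/-- The statement that the expanding number `γ_T = lim_n |T_{n+1}|/|T_n|` exists
and equals `γ`. -/
def HasExpandingNumber {d : ℕ} (T : Set (List (Fin d))) (γ : ℝ) : Prop :=
  Tendsto (fun n : ℕ => ((level T (n + 1)).ncard : ℝ) / ((level T n).ncard : ℝ)) atTop (nhds γ)

/-- `|P(Δ_n, 𝒯)|`: the number of restrictions of labeled trees of `𝒯` to `Δ_n`. -/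
noncomputable def ballBlockCount {d : ℕ} {A : Type*} (T : Set (List (Fin d)))
    (𝒯 : Set (List (Fin d) → A)) (n : ℕ) : ℕ :=
  Set.ncard ((fun t (w : ball T n) => t (w : List (Fin d))) '' 𝒯)

/-- The entropy of a tree-shift, `h(𝒯) = limsup_n log |P(Δ_n,𝒯)| / |Δ_n|`. -/
noncomputable def treeEntropy {d : ℕ} {A : Type*} (T : Set (List (Fin d)))
    (𝒯 : Set (List (Fin d) → A)) : ℝ :=
  limsup (fun n : ℕ => Real.log (ballBlockCount T 𝒯 n) / ((ball T n).ncard : ℝ)) atTop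

/-- `S` is an independence set for `𝒯`: every assignment of symbols on `S`
extends to an element of `𝒯`. -/
def IsIndepSet {I A : Type*} (𝒯 : Set (I → A)) (S : Set I) : Prop :=
  ∀ u : I → A, ∃ t ∈ 𝒯, ∀ w ∈ S, t w = u w

/-- `𝒯` is a tree-shift on `T`: the set of labelings of `T` avoiding every pattern
from some set `F` of forbidden finite patterns (a pattern is a finitely supported
partial labeling; it appears in `t` at a vertex `g ∈ T` if every cell of the pattern,
translated to sit below `g`, lies in `T` and carries the prescribed label). -/
def IsTreeShift {d : ℕ} {A : Type*} (T : Set (List (Fin d)))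
    (𝒯 : Set (List (Fin d) → A)) : Prop :=
  ∃ F : Set (List (Fin d) → Option A),
    (∀ p ∈ F, {w | p w ≠ none}.Finite) ∧
    𝒯 = {t | ∀ p ∈ F, ∀ g ∈ T,
          ¬ ∀ w : List (Fin d), ∀ a : A, p w = some a → g ++ w ∈ T ∧ t (g ++ w) = a}

/-- The boundary independence property: there are `l ≥ 1` and sets
`S_n ⊆ Δ_n \ Δ_{n−l}` (for `n ≥ l`), each an independence set for `𝒯`, with
`limsup_n |S_n ∩ Δ_n|/|Δ_n| > 0`. -/
def BoundaryIndep {d : ℕ} {A : Type*} (T : Set (List (Fin d)))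
    (𝒯 : Set (List (Fin d) → A)) : Prop :=
  ∃ l : ℕ, 1 ≤ l ∧ ∃ S : ℕ → Set (List (Fin d)),
    (∀ n, l ≤ n → S n ⊆ ball T n \ ball T (n - l)) ∧
    (∀ n, l ≤ n → IsIndepSet 𝒯 (S n)) ∧
    0 < limsup (fun n : ℕ => ((S n ∩ ball T n).ncard : ℝ) / ((ball T n).ncard : ℝ)) atTop

/-! ### Auxiliary lemmas -/

section TreeAux
variable {d : ℕ} (T : Set (List (Fin d)))

lemma ball_finite (n : ℕ) : (ball T n).Finite :=
  (List.finite_length_le (Fin d) n).subset fun _ hw => hw.2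

lemma level_finite (n : ℕ) : (level T n).Finite :=
  (List.finite_length_eq (Fin d) n).subset fun _ hw => hw.2

lemma level_subset_ball (n : ℕ) : level T n ⊆ ball T n := fun _ hw => ⟨hw.1, hw.2.le⟩

lemma ball_mono {m n : ℕ} (h : m ≤ n) : ball T m ⊆ ball T n :=
  fun _ hw => ⟨hw.1, hw.2.trans h⟩

lemma ball_succ (n : ℕ) : ball T (n + 1) = ball T n ∪ level T (n + 1) := by
  ext w
  constructor
  · rintro ⟨hw, hlen⟩
    rcases Nat.lt_or_ge w.length (n+1) with h | h
    · exact Or.inl ⟨hw, Nat.lt_succ_iff.mp h⟩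
    · exact Or.inr ⟨hw, le_antisymm hlen h⟩
  · rintro (⟨hw, hlen⟩ | ⟨hw, hlen⟩)
    · exact ⟨hw, hlen.trans (Nat.le_succ n)⟩
    · exact ⟨hw, hlen.le⟩

lemma ncard_ball_succ (n : ℕ) :
    (ball T (n+1)).ncard = (ball T n).ncard + (level T (n+1)).ncard := by
  rw [ball_succ, Set.ncard_union_eq _ (ball_finite T n) (level_finite T (n+1))]
  rw [Set.disjoint_left]
  rintro w ⟨_, hlen⟩ ⟨_, hlen'⟩
  omega

lemma ball_nonempty (hT : IsTree T) (n : ℕ) : (ball T n).Nonempty :=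
  ⟨[], hT.1, by simp⟩

lemma one_le_ncard_ball (hT : IsTree T) (n : ℕ) : 1 ≤ (ball T n).ncard :=
  (Set.ncard_pos (ball_finite T n)).mpr (ball_nonempty T hT n)

end TreeAux

lemma log_nat_mono {a c : ℕ} (h : a ≤ c) : Real.log a ≤ Real.log c := by
  rcases Nat.eq_zero_or_pos a with rfl | ha
  · simpa using Real.log_natCast_nonneg c
  · exact Real.log_le_log (by exact_mod_cast ha) (by exact_mod_cast h)

lemma pow_card_of_set_fun {α : Type*} (s : Set α) (hs : s.Finite) (P : Set (↥s → Bool)) :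
    P.ncard ≤ 2 ^ s.ncard := by
  haveI := hs.to_subtype
  calc P.ncard ≤ (Set.univ : Set (↥s → Bool)).ncard :=
        Set.ncard_le_ncard (Set.subset_univ _) Set.finite_univ
    _ = Nat.card (↥s → Bool) := Set.ncard_univ _
    _ = Nat.card Bool ^ Nat.card ↥s := Nat.card_fun
    _ = 2 ^ s.ncard := by rw [Nat.card_coe_set_eq, Nat.card_eq_fintype_card]; rfl

lemma indep_le_count {I : Type*} (𝒯 : Set (I → Bool)) (S b : Set I) (hb : b.Finite)
    (hSb : S ⊆ b) (hS : IsIndepSet 𝒯 S) :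
    2 ^ S.ncard ≤ ((fun t (w : ↥b) => t ↑w) '' 𝒯).ncard := by
  classical
  haveI := hb.to_subtype
  haveI := (hb.subset hSb).to_subtype
  set P := (fun t (w : ↥b) => t ↑w) '' 𝒯 with hP
  let ext : (↥S → Bool) → (I → Bool) := fun u w => if h : w ∈ S then u ⟨w, h⟩ else false
  have hext : ∀ u : ↥S → Bool, ∀ w : ↥S, ext u ↑w = u w := by
    intro u w; simp [ext, w.2]
  let pick : (↥S → Bool) → (I → Bool) := fun u => (hS (ext u)).choose
  have hpick : ∀ u, pick u ∈ 𝒯 ∧ ∀ w ∈ S, pick u w = ext u w := fun u => (hS (ext u)).choose_spec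
  let Φ : (↥S → Bool) → (↥b → Bool) := fun u (w : ↥b) => pick u ↑w
  have hΦval : ∀ u (w : ↥S), Φ u ⟨↑w, hSb w.2⟩ = u w := by
    intro u w
    have := (hpick u).2 ↑w w.2
    rw [hext] at this
    simpa [Φ] using this
  have hmaps : ∀ u, Φ u ∈ P := fun u => ⟨pick u, (hpick u).1, rfl⟩
  have hinj : Function.Injective Φ := by
    intro u u' h
    funext w
    rw [← hΦval u w, ← hΦval u' w, h]
  calc 2 ^ S.ncard = Nat.card (↥S → Bool) := by
        rw [Nat.card_fun, Nat.card_coe_set_eq, Nat.card_eq_fintype_card]; rfl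
    _ = (Set.univ : Set (↥S → Bool)).ncard := (Set.ncard_univ _).symm
    _ ≤ P.ncard := Set.ncard_le_ncard_of_injOn Φ (fun u _ => hmaps u)
        (hinj.injOn) (Set.toFinite P)

lemma ncard_prod_set {α β : Type*} (s : Set α) (t : Set β) :
    (s ×ˢ t).ncard = s.ncard * t.ncard := by
  rw [← Nat.card_coe_set_eq, ← Nat.card_coe_set_eq, ← Nat.card_coe_set_eq,
    ← Nat.card_prod]
  exact Nat.card_congr (Equiv.Set.prod s t)

lemma key_extract {I : Type*} (𝒯 : Set (I → Bool)) (b b' : Set I) (hb : b.Finite)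
    (hb' : b' ⊆ b) (k : ℕ)
    (hcount : ∀ E : Finset I, ↑E = b \ b' →
      (∑ i ∈ Finset.range k, (E.card).choose i) * 2 ^ b'.ncard
        < ((fun t (w : ↥b) => t ↑w) '' 𝒯).ncard) :
    ∃ s : Finset I, ↑s ⊆ b \ b' ∧ k ≤ s.card ∧ IsIndepSet 𝒯 ↑s := by
  classical
  haveI := hb.to_subtype
  haveI := (hb.subset hb').to_subtype
  set P := (fun t (w : ↥b) => t ↑w) '' 𝒯 with hPdef
  set E : Finset I := hb.toFinset \ (hb.subset hb').toFinset with hEdef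
  have hEcoe : (↑E : Set I) = b \ b' := by
    simp [hEdef, Set.Finite.coe_toFinset]
  have hEb : ∀ w ∈ E, w ∈ b := by
    intro w hw
    have : w ∈ b \ b' := hEcoe ▸ hw
    exact this.1
  have hcount' := hcount E hEcoe
  set 𝒜s : Set (Finset I) := (fun t => E.filter (fun w => t w = true)) '' 𝒯 with h𝒜def
  have h𝒜fin : 𝒜s.Finite := by
    apply Set.Finite.subset (E.powerset.finite_toSet)
    rintro _ ⟨t, _, rfl⟩
    simp only [Finset.coe_powerset, Set.mem_preimage, Set.mem_powerset_iff]
    exact_mod_cast Finset.filter_subset _ _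
  set 𝒜 : Finset (Finset I) := h𝒜fin.toFinset with h𝒜
  have step1 : P.ncard ≤ 2 ^ b'.ncard * 𝒜.card := by
    set Ψ : (↥b → Bool) → (↥b' → Bool) × Finset I :=
      fun p => (fun w => p ⟨↑w, hb' w.2⟩,
        E.filter (fun w => ∃ h : w ∈ b, p ⟨w, h⟩ = true)) with hΨ
    have hmaps : ∀ p ∈ P, Ψ p ∈ (Set.univ : Set (↥b' → Bool)) ×ˢ (↑𝒜 : Set (Finset I)) := by
      rintro _ ⟨t, ht, rfl⟩
      refine ⟨Set.mem_univ _, ?_⟩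
      simp only [h𝒜, Set.Finite.coe_toFinset]
      refine ⟨t, ht, ?_⟩
      apply Finset.filter_congr
      intro w hw
      constructor
      · intro h; exact ⟨hEb w hw, h⟩
      · rintro ⟨_, h⟩; exact h
    have hinj : Set.InjOn Ψ P := by
      intro p _ p' _ h
      funext w
      rcases Classical.em (↑w ∈ b') with hw' | hw'
      · have := congrFun (congrArg Prod.fst h) ⟨↑w, hw'⟩
        simpa using this
      · have hwE : ↑w ∈ E := by
          rw [← Finset.mem_coe, hEcoe]; exact ⟨w.2, hw'⟩
        have h2 := congrArg Prod.snd h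
        simp only [hΨ] at h2
        have := Finset.ext_iff.mp h2 ↑w
        simp only [Finset.mem_filter, hwE, true_and] at this
        have hpw : (∃ h : ↑w ∈ b, p ⟨↑w, h⟩ = true) ↔ p w = true := by
          constructor
          · rintro ⟨h, hh⟩; convert hh
          · intro h; exact ⟨w.2, by convert h⟩
        have hpw' : (∃ h : ↑w ∈ b, p' ⟨↑w, h⟩ = true) ↔ p' w = true := by
          constructor
          · rintro ⟨h, hh⟩; convert hh
          · intro h; exact ⟨w.2, by convert h⟩
        rw [hpw, hpw'] at this
        exact Bool.eq_iff_iff.mpr this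
    calc P.ncard ≤ ((Set.univ : Set (↥b' → Bool)) ×ˢ (↑𝒜 : Set (Finset I))).ncard :=
          Set.ncard_le_ncard_of_injOn Ψ hmaps hinj
            ((Set.finite_univ.prod (𝒜.finite_toSet)))
      _ = 2 ^ b'.ncard * 𝒜.card := by
          rw [ncard_prod_set, Set.ncard_univ, Set.ncard_coe_finset, Nat.card_fun,
            Nat.card_coe_set_eq, Nat.card_eq_fintype_card]
          rfl
  have step2 : ∑ i ∈ Finset.range k, (E.card).choose i < 𝒜.card := by
    by_contra hcon
    push_neg at hcon
    have := hcount'.trans_le step1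
    have h2 : (2:ℕ) ^ b'.ncard ≠ 0 := by positivity
    nlinarith [Nat.pos_of_ne_zero h2]
  have hshat : ∃ s ∈ 𝒜.shatterer, k ≤ s.card := by
    by_contra hcon
    push_neg at hcon
    have hsub : 𝒜.shatterer ⊆ (Finset.range k).biUnion (fun i => Finset.powersetCard i E) := by
      intro s hs
      have hshat := Finset.mem_shatterer.mp hs
      obtain ⟨u, hu𝒜, hsu⟩ := hshat.exists_superset
      have huE : u ⊆ E := by
        have : u ∈ 𝒜s := by rwa [← h𝒜fin.mem_toFinset]
        obtain ⟨t, _, rfl⟩ := this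
        exact Finset.filter_subset _ _
      rw [Finset.mem_biUnion]
      exact ⟨s.card, Finset.mem_range.mpr (hcon s hs), Finset.mem_powersetCard.mpr
        ⟨hsu.trans huE, rfl⟩⟩
    have := (𝒜.card_le_card_shatterer.trans (Finset.card_le_card hsub)).trans
      (Finset.card_biUnion_le)
    simp only [Finset.card_powersetCard] at this
    omega
  obtain ⟨s, hs, hks⟩ := hshat
  have hshatters : 𝒜.Shatters s := Finset.mem_shatterer.mp hs
  have hsE : s ⊆ E := by
    obtain ⟨u, hu𝒜, hsu⟩ := hshatters.exists_superset
    have : u ∈ 𝒜s := by rwa [← h𝒜fin.mem_toFinset]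
    obtain ⟨t, _, rfl⟩ := this
    exact hsu.trans (Finset.filter_subset _ _)
  refine ⟨s, ?_, hks, ?_⟩
  · rw [← hEcoe]; exact_mod_cast hsE
  · intro u
    obtain ⟨B, hB𝒜, hsB⟩ := hshatters (Finset.filter_subset (fun w => u w = true) s)
    have : B ∈ 𝒜s := by rwa [← h𝒜fin.mem_toFinset]
    obtain ⟨t, ht𝒯, rfl⟩ := this
    refine ⟨t, ht𝒯, ?_⟩
    intro w hw
    have hwm : w ∈ s := hw
    have := Finset.ext_iff.mp hsB w
    simp only [Finset.mem_inter, Finset.mem_filter, hwm, true_and] at this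
    have hwE : w ∈ E := hsE hwm
    simp only [hwE, true_and] at this
    exact Bool.eq_iff_iff.mpr this

lemma sum_choose_le_real (m j : ℕ) (hj : 1 ≤ j) :
    (∑ i ∈ Finset.range (m / j + 1), (m.choose i : ℝ))
      ≤ (j : ℝ) ^ (m / j) * Real.exp ((m : ℝ) / j) := by
  set K := m / j with hK
  have hj0 : (0:ℝ) < j := by exact_mod_cast hj
  have hx0 : (0:ℝ) < 1 / j := by positivity
  have hx1 : (1:ℝ) / j ≤ 1 := by
    rw [div_le_one hj0]; exact_mod_cast hj
  have hKm : K ≤ m := Nat.div_le_self m j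
  have h1 : ∀ i ∈ Finset.range (K + 1),
      (m.choose i : ℝ) ≤ (j:ℝ) ^ K * ((m.choose i : ℝ) * (1/j) ^ i) := by
    intro i hi
    have hiK : i ≤ K := Nat.lt_succ_iff.mp (Finset.mem_range.mp hi)
    have : (1:ℝ) ≤ (j:ℝ) ^ K * (1/j) ^ i := by
      have heq : (j:ℝ) ^ K * (1/j) ^ i = (j:ℝ) ^ (K - i) := by
        rw [div_pow, one_pow, mul_one_div, pow_sub₀ _ (by positivity : (j:ℝ) ≠ 0) hiK,
          div_eq_mul_inv]
      rw [heq]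
      exact one_le_pow₀ (by exact_mod_cast hj)
    calc (m.choose i : ℝ) = (m.choose i : ℝ) * 1 := by ring
      _ ≤ (m.choose i : ℝ) * ((j:ℝ) ^ K * (1/j) ^ i) := by
          apply mul_le_mul_of_nonneg_left this (by positivity)
      _ = (j:ℝ) ^ K * ((m.choose i : ℝ) * (1/j) ^ i) := by ring
  calc (∑ i ∈ Finset.range (K + 1), (m.choose i : ℝ))
      ≤ ∑ i ∈ Finset.range (K + 1), (j:ℝ) ^ K * ((m.choose i : ℝ) * (1/j) ^ i) :=
        Finset.sum_le_sum h1
    _ = (j:ℝ) ^ K * ∑ i ∈ Finset.range (K + 1), ((1/j:ℝ) ^ i * (m.choose i : ℝ)) := by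
        rw [Finset.mul_sum]; congr 1; funext i; ring
    _ ≤ (j:ℝ) ^ K * ∑ i ∈ Finset.range (m + 1), ((1/j:ℝ) ^ i * (m.choose i : ℝ)) := by
        apply mul_le_mul_of_nonneg_left _ (by positivity)
        apply Finset.sum_le_sum_of_subset_of_nonneg
        · exact Finset.range_subset_range.mpr (by omega)
        · intro i _ _; positivity
    _ = (j:ℝ) ^ K * ((1:ℝ)/j + 1) ^ m := by rw [add_pow]; simp
    _ ≤ (j:ℝ) ^ K * Real.exp ((m:ℝ)/j) := by
        apply mul_le_mul_of_nonneg_left _ (by positivity)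
        calc ((1:ℝ)/j + 1) ^ m ≤ (Real.exp (1/j)) ^ m := by
              apply pow_le_pow_left₀ (by positivity) (Real.add_one_le_exp _)
          _ = Real.exp ((m:ℝ)/j) := by
              rw [← Real.exp_nat_mul]; congr 1; ring

section Growth
variable {L B : ℕ → ℝ} {γ' : ℝ} {N : ℕ}

lemma growth_pow (hγ' : 1 < γ') (hL : ∀ n, N ≤ n → 1 ≤ L n ∧ γ' * L n ≤ L (n + 1)) :
    ∀ k n, N ≤ n → γ' ^ k * L n ≤ L (n + k) := by
  intro k
  induction k with
  | zero => intro n hn; simp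
  | succ k ih =>
    intro n hn
    have h1 := ih n hn
    have h2 := (hL (n + k) (by omega)).2
    calc γ' ^ (k+1) * L n = γ' * (γ' ^ k * L n) := by ring
      _ ≤ γ' * L (n + k) := by
          apply mul_le_mul_of_nonneg_left h1 (by linarith)
      _ ≤ L (n + k + 1) := h2

lemma growth_ball (hγ' : 1 < γ') (hL : ∀ n, N ≤ n → 1 ≤ L n ∧ γ' * L n ≤ L (n + 1))
    (hB : ∀ n, B (n + 1) = B n + L (n + 1)) :
    ∀ m, N ≤ m → B m ≤ B N + (γ' / (γ' - 1)) * L m := by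
  have hK : 0 ≤ γ' / (γ' - 1) := div_nonneg (by linarith) (by linarith)
  intro m hm
  induction m with
  | zero =>
    have : N = 0 := by omega
    subst this
    have := (hL 0 le_rfl).1
    nlinarith
  | succ m ih =>
    rcases Nat.lt_or_ge m N with h | h
    · have hNm : N = m + 1 := by omega
      subst hNm
      have := (hL (m+1) le_rfl).1
      nlinarith
    · have ih' := ih h
      have h2 := (hL m h).2
      have h1 := (hL m h).1
      have hL1 : 0 ≤ L (m+1) := by nlinarith
      have hpos : (0:ℝ) < γ' - 1 := by linarith
      have key : (γ' / (γ' - 1)) * L m + L (m + 1) ≤ (γ' / (γ' - 1)) * L (m + 1) := by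
        rw [div_mul_eq_mul_div, div_mul_eq_mul_div, div_add' _ _ _ (ne_of_gt hpos),
          div_le_div_iff₀ hpos hpos]
        nlinarith
      rw [hB m]
      linarith

end Growth

lemma exists_j (ε : ℝ) (hε : 0 < ε) : ∃ j : ℕ, 1 ≤ j ∧ (1 + Real.log j) / j < ε := by
  have h1 : Tendsto (fun x : ℝ => Real.log x / (1 * x + 0)) atTop (nhds 0) :=
    Real.tendsto_pow_log_div_mul_add_atTop 1 0 1 one_ne_zero |>.congr (fun x => by rw [pow_one])
  have h1' : Tendsto (fun x : ℝ => Real.log x / x) atTop (nhds 0) := by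
    apply h1.congr
    intro x; rw [one_mul, add_zero]
  have h2 : Tendsto (fun x : ℝ => 1 / x) atTop (nhds (0:ℝ)) :=
    tendsto_inv_atTop_zero.congr (fun x => (one_div x).symm)
  have h3 : Tendsto (fun x : ℝ => (1 + Real.log x) / x) atTop (nhds 0) := by
    have := h2.add h1'
    simp only [add_zero] at this
    apply this.congr
    intro x
    ring
  have h4 : Tendsto (fun n : ℕ => (1 + Real.log n) / n) atTop (nhds 0) :=
    h3.comp tendsto_natCast_atTop_atTop
  have h5 := (h4.eventually (eventually_lt_nhds hε)).and (eventually_ge_atTop 1)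
  obtain ⟨j, hj1, hj2⟩ := h5.exists
  exact ⟨j, hj2, hj1⟩


set_option maxHeartbeats 3200000 in
/-- For a tree-shift `𝒯 ⊆ {0,1}^T` on an expandable tree
(`γ_T > 1`), `h(𝒯) > 0` iff `𝒯` has the boundary independence property. -/
theorem pos_entropy_iff_boundaryIndep
    (d : ℕ) (T : Set (List (Fin d))) (hT : IsTree T)
    (γ : ℝ) (hγ : HasExpandingNumber T γ) (hγ1 : 1 < γ)
    (𝒯 : Set (List (Fin d) → Bool)) (h𝒯 : IsTreeShift T 𝒯) :
    0 < treeEntropy T 𝒯 ↔ BoundaryIndep T 𝒯 := by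
  classical
  have hlog2 : (0:ℝ) < Real.log 2 := Real.log_pos one_lt_two
  set b : ℕ → ℕ := fun n => (ball T n).ncard with hbdef
  set Lv : ℕ → ℕ := fun n => (level T n).ncard with hLdef
  set cnt : ℕ → ℕ := fun n => ballBlockCount T 𝒯 n with hcntdef
  set f : ℕ → ℝ := fun n => Real.log (cnt n) / (b n : ℝ) with hfdef
  have hent : treeEntropy T 𝒯 = limsup f atTop := rfl
  have hb1 : ∀ n, 1 ≤ b n := fun n => one_le_ncard_ball T hT n
  have hbpos : ∀ n, (0:ℝ) < b n := fun n => by exact_mod_cast hb1 n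
  have hcntle : ∀ n, cnt n ≤ 2 ^ b n := fun n =>
    pow_card_of_set_fun (ball T n) (ball_finite T n) _
  have hf0 : ∀ n, 0 ≤ f n := fun n =>
    div_nonneg (Real.log_natCast_nonneg _) (le_of_lt (hbpos n))
  have hfle : ∀ n, f n ≤ Real.log 2 := by
    intro n
    have h1 : Real.log (cnt n) ≤ (b n : ℝ) * Real.log 2 := by
      calc Real.log (cnt n) ≤ Real.log ((2:ℕ) ^ b n : ℕ) := log_nat_mono (hcntle n)
        _ = (b n : ℝ) * Real.log 2 := by
            rw [Nat.cast_pow, Real.log_pow]; norm_num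
    rw [hfdef]
    rw [div_le_iff₀ (hbpos n)]
    linarith [h1]
  constructor
  · -- hard direction : positive entropy implies boundary independence
    intro hpos
    set c : ℝ := treeEntropy T 𝒯 with hc
    have hcpos : 0 < c := hpos
    have hcob : IsCoboundedUnder (· ≤ ·) atTop f :=
      IsCoboundedUnder.of_frequently_ge (Frequently.of_forall (fun n => hf0 n))
    have hcle : c ≤ Real.log 2 := by
      rw [hent]
      exact limsup_le_of_le hcob (Eventually.of_forall hfle)
    have hfreq : ∃ᶠ n in atTop, c / 2 < f n := by
      apply frequently_lt_of_lt_limsup hcob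
      rw [← hent]; linarith
    -- 𝒯 is nonempty
    have h𝒯ne : 𝒯.Nonempty := by
      obtain ⟨n, hn⟩ := hfreq.exists
      have hc0 : cnt n ≠ 0 := by
        intro h
        have hfn : f n = 0 := by
          show Real.log (cnt n) / (b n : ℝ) = 0
          rw [h]
          simp
        rw [hfn] at hn
        linarith
      have hne : ((fun t (w : ball T n) => t (w : List (Fin d))) '' 𝒯).Nonempty :=
        Set.nonempty_of_ncard_ne_zero hc0
      obtain ⟨_, t, ht, _⟩ := hne
      exact ⟨t, ht⟩
    -- expanding number machinery
    set γ' : ℝ := (1 + γ) / 2 with hγ'def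
    have hγ'1 : 1 < γ' := by rw [hγ'def]; linarith
    have hγ'γ : γ' < γ := by rw [hγ'def]; linarith
    obtain ⟨N, hN⟩ := eventually_atTop.mp (hγ.eventually (eventually_gt_nhds hγ'γ))
    have hLev : ∀ n, N ≤ n → (1:ℝ) ≤ (Lv n : ℝ) ∧ γ' * (Lv n : ℝ) ≤ (Lv (n+1) : ℝ) := by
      intro n hn
      have hr : γ' < (Lv (n+1) : ℝ) / (Lv n : ℝ) := hN n hn
      have hLn : (0:ℝ) < (Lv n : ℝ) := by
        by_contra hcon
        push_neg at hcon
        have h0 : (Lv n : ℝ) = 0 := le_antisymm hcon (by positivity)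
        rw [h0, div_zero] at hr
        linarith
      constructor
      · have : 1 ≤ Lv n := by exact_mod_cast hLn
        exact_mod_cast this
      · have := (lt_div_iff₀ hLn).mp hr
        linarith
    have hgrow := growth_pow (L := fun n => (Lv n : ℝ)) hγ'1 hLev
    have hBrec : ∀ n, ((b (n+1) : ℕ) : ℝ) = (b n : ℝ) + (Lv (n+1) : ℝ) := by
      intro n
      rw [hbdef, hLdef]
      simp only
      rw [ncard_ball_succ]
      push_cast
      ring
    have hballs := growth_ball (L := fun n => (Lv n : ℝ)) (B := fun n => (b n : ℝ))
      hγ'1 hLev hBrec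
    set K : ℝ := γ' / (γ' - 1) with hKdef
    have hKpos : 0 < K := by
      rw [hKdef]; apply div_pos <;> linarith
    -- choose l
    have hpowtop : Tendsto (fun l : ℕ => γ' ^ l) atTop atTop :=
      tendsto_pow_atTop_atTop_of_one_lt hγ'1
    obtain ⟨l, hlge, hl1⟩ :=
      ((hpowtop.eventually_ge_atTop (K * (8 * Real.log 2) / c)).and
        (eventually_ge_atTop 1)).exists
    have hγ'lpos : (0:ℝ) < γ' ^ l := pow_pos (by linarith) l
    have hKl : K / γ' ^ l ≤ c / (8 * Real.log 2) := by
      rw [div_le_div_iff₀ hγ'lpos (by positivity)]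
      have := (div_le_iff₀ hcpos).mp hlge
      nlinarith
    -- choose j
    obtain ⟨j, hj1, hjlt⟩ := exists_j (c/8) (by linarith)
    have hjpos : (0:ℝ) < j := by exact_mod_cast hj1
    -- b n tends to infinity
    have hbtop : Tendsto (fun n => (b n : ℝ)) atTop atTop := by
      apply tendsto_atTop_mono' atTop
        (_ : ∀ᶠ n in atTop, γ' ^ (n - N) ≤ (b n : ℝ))
      · exact hpowtop.comp (tendsto_sub_atTop_nat N)
      · filter_upwards [eventually_ge_atTop N] with n hn
        have h1 : γ' ^ (n - N) * (Lv N : ℝ) ≤ (Lv (N + (n - N)) : ℝ) := hgrow (n - N) N le_rfl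
        rw [Nat.add_sub_cancel' hn] at h1
        have h2 : (1:ℝ) ≤ (Lv N : ℝ) := (hLev N le_rfl).1
        have h3 : (Lv n : ℝ) ≤ (b n : ℝ) := by
          rw [hLdef, hbdef]
          exact_mod_cast Set.ncard_le_ncard (level_subset_ball T n) (ball_finite T n)
        nlinarith
    have hbN : ∀ᶠ n in atTop, ((b N : ℕ) : ℝ) ≤ c / (8 * Real.log 2) * (b n : ℝ) := by
      filter_upwards [hbtop.eventually_ge_atTop ((b N : ℝ) * (8 * Real.log 2) / c)] with n hn
      rw [div_le_iff₀ hcpos] at hn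
      rw [div_mul_eq_mul_div, le_div_iff₀ (by positivity)]
      nlinarith
    -- the main eventual bound
    have hEv : ∀ᶠ n in atTop, N + l ≤ n ∧
        (b (n - l) : ℝ) * Real.log 2 ≤ (c/4) * (b n : ℝ) ∧
        (b (n - l) : ℝ) ≤ (1/2) * (b n : ℝ) := by
      filter_upwards [eventually_ge_atTop (N + l), hbN] with n hn hbn
      have hnl : N ≤ n - l := by omega
      have h1 : (b (n - l) : ℝ) ≤ (b N : ℝ) + K * (Lv (n - l) : ℝ) := hballs (n - l) hnl
      have h2 : γ' ^ l * (Lv (n - l) : ℝ) ≤ (Lv (n - l + l) : ℝ) := hgrow l (n - l) hnl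
      rw [Nat.sub_add_cancel (by omega : l ≤ n)] at h2
      have h3 : (Lv n : ℝ) ≤ (b n : ℝ) := by
        rw [hLdef, hbdef]
        exact_mod_cast Set.ncard_le_ncard (level_subset_ball T n) (ball_finite T n)
      have h4 : (Lv (n - l) : ℝ) ≤ (b n : ℝ) / γ' ^ l := by
        rw [le_div_iff₀ hγ'lpos]
        nlinarith
      have h5 : (b (n - l) : ℝ) ≤ (b N : ℝ) + (K / γ' ^ l) * (b n : ℝ) := by
        rw [div_mul_eq_mul_div]
        calc (b (n - l) : ℝ) ≤ (b N : ℝ) + K * (Lv (n - l) : ℝ) := h1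
          _ ≤ (b N : ℝ) + K * ((b n : ℝ) / γ' ^ l) := by
              have := mul_le_mul_of_nonneg_left h4 (le_of_lt hKpos)
              linarith
          _ = (b N : ℝ) + K * (b n : ℝ) / γ' ^ l := by rw [mul_div_assoc]
      have h6 : (K / γ' ^ l) * (b n : ℝ) ≤ c / (8 * Real.log 2) * (b n : ℝ) :=
        mul_le_mul_of_nonneg_right hKl (le_of_lt (hbpos n))
      have h7 : (b (n - l) : ℝ) ≤ c / (4 * Real.log 2) * (b n : ℝ) := by
        have e : c / (8 * Real.log 2) * (b n : ℝ) + c / (8 * Real.log 2) * (b n : ℝ)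
            = c / (4 * Real.log 2) * (b n : ℝ) := by
          field_simp
          ring
        linarith [hbn, h5, h6, e]
      refine ⟨hn, ?_, ?_⟩
      · have h8 := mul_le_mul_of_nonneg_right h7 (le_of_lt hlog2)
        have h9 : c / (4 * Real.log 2) * (b n : ℝ) * Real.log 2 = (c/4) * (b n : ℝ) := by
          field_simp
        linarith
      · have hc2 : c / (4 * Real.log 2) ≤ 1/2 := by
          rw [div_le_div_iff₀ (by positivity) (by positivity)]
          nlinarith
        have := mul_le_mul_of_nonneg_right hc2 (le_of_lt (hbpos n))
        linarith
    -- the per-n construction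
    set Pred : ℕ → Prop := fun n => ∃ Sn : Set (List (Fin d)),
      Sn ⊆ ball T n \ ball T (n - l) ∧ IsIndepSet 𝒯 Sn ∧
      (b n : ℝ) / (2 * j) ≤ ((Sn ∩ ball T n).ncard : ℝ) with hPreddef
    have hGood : ∀ n, c / 2 < f n → N + l ≤ n →
        (b (n - l) : ℝ) * Real.log 2 ≤ (c/4) * (b n : ℝ) →
        (b (n - l) : ℝ) ≤ (1/2) * (b n : ℝ) → Pred n := by
      intro n hfn hnl hblog hbhalf
      have hbsub : ball T (n - l) ⊆ ball T n := ball_mono T (Nat.sub_le n l)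
      have hble : b (n - l) ≤ b n := by
        rw [hbdef]
        exact Set.ncard_le_ncard hbsub (ball_finite T n)
      set m : ℕ := b n - b (n - l) with hmdef
      have hmcast : (m : ℝ) = (b n : ℝ) - (b (n - l) : ℝ) := by
        rw [hmdef]; push_cast [hble]; ring
      have hm2 : (b n : ℝ) / 2 ≤ (m : ℝ) := by rw [hmcast]; linarith
      have hmbn : m ≤ b n := by omega
      have hcntbig : (c/2) * (b n : ℝ) < Real.log (cnt n) := by
        have hfn' : c / 2 < Real.log (cnt n) / (b n : ℝ) := hfn
        rw [lt_div_iff₀ (hbpos n)] at hfn'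
        linarith
      have hcnt1 : 1 ≤ cnt n := by
        rcases Nat.eq_zero_or_pos (cnt n) with h | h
        · exfalso
          rw [h] at hcntbig
          simp only [Nat.cast_zero, Real.log_zero] at hcntbig
          nlinarith [hbpos n]
        · exact h
      set k : ℕ := m / j + 1 with hkdef
      have hcount : ∀ E : Finset (List (Fin d)), ↑E = ball T n \ ball T (n - l) →
          (∑ i ∈ Finset.range k, (E.card).choose i) * 2 ^ (ball T (n - l)).ncard
            < ((fun t (w : ↥(ball T n)) => t ↑w) '' 𝒯).ncard := by
        intro E hE
        have hEcard : E.card = m := by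
          rw [← Set.ncard_coe_finset, hE,
            Set.ncard_diff hbsub (ball_finite T (n - l))]
        rw [hEcard]
        have hgoal : ((∑ i ∈ Finset.range k, (m.choose i : ℝ)) * 2 ^ (b (n - l)) : ℝ)
            < (cnt n : ℝ) := by
          have hsum := sum_choose_le_real m j hj1
          rw [← hkdef] at hsum
          have e1 : ((j : ℝ) ^ (m / j)) ≤ Real.exp ((m:ℝ)/j * Real.log j) := by
            rw [← Real.exp_log (show (0:ℝ) < (j:ℝ)^(m/j) by positivity), Real.log_pow]
            apply Real.exp_le_exp.mpr
            apply mul_le_mul_of_nonneg_right (Nat.cast_div_le) (Real.log_natCast_nonneg j)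
          have e2 : (∑ i ∈ Finset.range k, (m.choose i : ℝ))
              ≤ Real.exp ((m:ℝ) * (1 + Real.log j) / j) := by
            calc (∑ i ∈ Finset.range k, (m.choose i : ℝ))
                ≤ (j : ℝ) ^ (m / j) * Real.exp ((m : ℝ) / j) := hsum
              _ ≤ Real.exp ((m:ℝ)/j * Real.log j) * Real.exp ((m : ℝ) / j) := by
                  apply mul_le_mul_of_nonneg_right e1 (Real.exp_nonneg _)
              _ = Real.exp ((m:ℝ) * (1 + Real.log j) / j) := by
                  rw [← Real.exp_add]; congr 1; field_simp; try ring
          have e3 : (m:ℝ) * (1 + Real.log j) / j ≤ (c/8) * (b n : ℝ) := by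
            have hm0 : (0:ℝ) ≤ (m:ℝ) := by positivity
            have : (m:ℝ) * ((1 + Real.log j) / j) ≤ (m:ℝ) * (c/8) :=
              mul_le_mul_of_nonneg_left (le_of_lt hjlt) hm0
            have hmb : (m:ℝ) ≤ (b n : ℝ) := by exact_mod_cast hmbn
            calc (m:ℝ) * (1 + Real.log j) / j = (m:ℝ) * ((1 + Real.log j) / j) := by ring
              _ ≤ (m:ℝ) * (c/8) := this
              _ ≤ (b n : ℝ) * (c/8) := by nlinarith
              _ = (c/8) * (b n : ℝ) := by ring
          have e4 : ((2:ℝ) ^ (b (n - l)) : ℝ) = Real.exp ((b (n-l) : ℝ) * Real.log 2) := by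
            rw [← Real.exp_log (show (0:ℝ) < (2:ℝ)^(b (n-l)) by positivity), Real.log_pow]
            try norm_num
          calc ((∑ i ∈ Finset.range k, (m.choose i : ℝ)) * 2 ^ (b (n - l)) : ℝ)
              ≤ Real.exp ((m:ℝ) * (1 + Real.log j) / j) * 2 ^ (b (n - l)) := by
                apply mul_le_mul_of_nonneg_right e2 (by positivity)
            _ = Real.exp ((m:ℝ) * (1 + Real.log j) / j + (b (n-l) : ℝ) * Real.log 2) := by
                rw [e4, ← Real.exp_add]
            _ ≤ Real.exp ((c/8) * (b n : ℝ) + (c/4) * (b n : ℝ)) := by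
                apply Real.exp_le_exp.mpr
                linarith
            _ < Real.exp ((c/2) * (b n : ℝ)) := by
                apply Real.exp_lt_exp.mpr
                nlinarith [hbpos n]
            _ < Real.exp (Real.log (cnt n)) := Real.exp_lt_exp.mpr hcntbig
            _ = (cnt n : ℝ) := Real.exp_log (by exact_mod_cast hcnt1)
        have : ((∑ i ∈ Finset.range k, m.choose i) * 2 ^ (b (n - l)) : ℕ) < cnt n := by
          have := hgoal
          push_cast at this
          exact_mod_cast this
        exact this
      obtain ⟨s, hssub, hks, hsind⟩ := key_extract 𝒯 (ball T n) (ball T (n - l))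
        (ball_finite T n) hbsub k hcount
      refine ⟨↑s, hssub, hsind, ?_⟩
      have hsball : (↑s : Set (List (Fin d))) ⊆ ball T n :=
        hssub.trans Set.diff_subset
      rw [Set.inter_eq_self_of_subset_left hsball, Set.ncard_coe_finset]
      have hmk : (m:ℝ) < (k:ℝ) * (j:ℝ) := by
        have h1 : m < k * j := by
          have := Nat.div_add_mod m j
          have := Nat.mod_lt m (show 0 < j by omega)
          rw [hkdef]
          nlinarith
        exact_mod_cast h1
      have hkcard : (k : ℝ) ≤ (s.card : ℝ) := by exact_mod_cast hks
      rw [div_le_iff₀ (by positivity)]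
      calc (b n : ℝ) = ((b n : ℝ)/2) * 2 := by ring
        _ ≤ (m:ℝ) * 2 := by nlinarith
        _ ≤ (k:ℝ) * j * 2 := by nlinarith
        _ ≤ (s.card:ℝ) * (2 * j) := by nlinarith
    have hPredFreq : ∃ᶠ n in atTop, Pred n ∧ l ≤ n := by
      have := (hfreq.and_eventually hEv).and_eventually (eventually_ge_atTop l)
      apply this.mono
      rintro n ⟨⟨hfn, hnl, hblog, hbhalf⟩, hln⟩
      exact ⟨hGood n hfn hnl hblog hbhalf, hln⟩
    -- define the sets
    set S : ℕ → Set (List (Fin d)) := fun n => if h : Pred n then h.choose else ∅ with hSdef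
    refine ⟨l, hl1, S, ?_, ?_, ?_⟩
    · intro n _
      rw [hSdef]
      by_cases h : Pred n
      · simp only [dif_pos h]
        exact h.choose_spec.1
      · simp only [dif_neg h]
        exact Set.empty_subset _
    · intro n _
      rw [hSdef]
      by_cases h : Pred n
      · simp only [dif_pos h]
        exact h.choose_spec.2.1
      · simp only [dif_neg h]
        intro u
        obtain ⟨t, ht⟩ := h𝒯ne
        exact ⟨t, ht, fun w hw => absurd hw (Set.notMem_empty w)⟩
    · have hbound : IsBoundedUnder (· ≤ ·) atTop
          (fun n : ℕ => ((S n ∩ ball T n).ncard : ℝ) / ((ball T n).ncard : ℝ)) := by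
        apply isBoundedUnder_of
        refine ⟨1, fun n => ?_⟩
        rw [div_le_one (hbpos n)]
        exact_mod_cast Set.ncard_le_ncard (Set.inter_subset_right) (ball_finite T n)
      have hfreq2 : ∃ᶠ n in atTop, 1 / (2 * (j:ℝ)) ≤
          ((S n ∩ ball T n).ncard : ℝ) / ((ball T n).ncard : ℝ) := by
        apply hPredFreq.mono
        rintro n ⟨hp, _⟩
        rw [hSdef]
        simp only [dif_pos hp]
        have hspec := hp.choose_spec.2.2
        rw [le_div_iff₀ (hbpos n)]
        calc (1:ℝ) / (2 * j) * (b n : ℝ) = (b n : ℝ) / (2 * j) := by ring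
          _ ≤ ((hp.choose ∩ ball T n).ncard : ℝ) := hspec
      calc (0:ℝ) < 1 / (2 * (j:ℝ)) := by positivity
        _ ≤ _ := le_limsup_of_frequently_le hfreq2 hbound
  · -- easy direction : boundary independence implies positive entropy
    rintro ⟨l, hl1, S, hsub, hindep, hpos⟩
    set dens : ℕ → ℝ := fun n =>
      ((S n ∩ ball T n).ncard : ℝ) / ((ball T n).ncard : ℝ) with hdensdef
    have hdens0 : ∀ n, 0 ≤ dens n := fun n =>
      div_nonneg (by positivity) (le_of_lt (hbpos n))
    have hcob : IsCoboundedUnder (· ≤ ·) atTop dens :=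
      IsCoboundedUnder.of_frequently_ge (Frequently.of_forall hdens0)
    set δ : ℝ := limsup dens atTop with hδ
    have hδpos : 0 < δ := hpos
    have hfreq : ∃ᶠ n in atTop, δ / 2 < dens n :=
      frequently_lt_of_lt_limsup hcob (by linarith)
    have hmain : ∃ᶠ n in atTop, (δ/2) * Real.log 2 ≤ f n := by
      apply (hfreq.and_eventually (eventually_ge_atTop l)).mono
      rintro n ⟨hd, hnl⟩
      have hSsub : S n ⊆ ball T n := (hsub n hnl).trans Set.diff_subset
      have hinter : S n ∩ ball T n = S n := Set.inter_eq_self_of_subset_left hSsub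
      have hcntlb : 2 ^ (S n).ncard ≤ cnt n :=
        indep_le_count 𝒯 (S n) (ball T n) (ball_finite T n) hSsub (hindep n hnl)
      have hlog : ((S n).ncard : ℝ) * Real.log 2 ≤ Real.log (cnt n) := by
        calc ((S n).ncard : ℝ) * Real.log 2 = Real.log ((2:ℕ) ^ (S n).ncard : ℕ) := by
              rw [Nat.cast_pow, Real.log_pow]; norm_num
          _ ≤ Real.log (cnt n) := log_nat_mono hcntlb
      have hd' : δ/2 * (b n : ℝ) < ((S n).ncard : ℝ) := by
        have hh : δ/2 < ((S n ∩ ball T n).ncard : ℝ) / ((ball T n).ncard : ℝ) := hd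
        rw [hinter, lt_div_iff₀ (hbpos n)] at hh
        exact hh
      show (δ/2) * Real.log 2 ≤ Real.log (cnt n) / (b n : ℝ)
      rw [le_div_iff₀ (hbpos n)]
      calc (δ/2) * Real.log 2 * (b n : ℝ) = (δ/2 * (b n : ℝ)) * Real.log 2 := by ring
        _ ≤ ((S n).ncard : ℝ) * Real.log 2 := by nlinarith [hd', hlog2]
        _ ≤ Real.log (cnt n) := hlog
    have hboundf : IsBoundedUnder (· ≤ ·) atTop f :=
      isBoundedUnder_of ⟨Real.log 2, hfle⟩
    calc (0:ℝ) < (δ/2) * Real.log 2 := by positivity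
      _ ≤ limsup f atTop := le_limsup_of_frequently_le hmain hboundf
      _ = treeEntropy T 𝒯 := hent.symm
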